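/- arXiv:1506.03965 — 3 statements merged into one kernel-verified Lean document; each statement's English description precedes it below -/
import Mathlib

section
/- Let δ(w,z) = |g₀(w,z)|^{1/2} where, for w, z ∈ bD, |g₀(w,z)| ≈ |Im⟨∂ρ(w), w−z⟩| + |w−z|². Then δ satisfies the quasi-triangle inequality: δ(w,z) ≲ δ(w,ζ) + δ(ζ,z) for all w, ζ, z ∈ bD. -/
/-!
Write `g(w, z) = ⟨∂ρ(w), w − z⟩`. For three points the pairing splits exactly as
`g(w, z) = g(w, ζ) + g(ζ, z) + ⟨∂ρ(w) − ∂ρ(ζ), ζ − z⟩`, and by Cauchy–Schwarz and the Lipschitz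
bound on `∂ρ` the last term is `O(|w − ζ| |ζ − z|) = O(|w − ζ|² + |ζ − z|²)`. Hence
`Q(w, z) = |Im g(w, z)| + |w − z|²` is a quasi-metric, and so is `δ ≈ Q^{1/2}`.
-/

open Finset

theorem EuclideanSpace.norm_sum_mul_le {𝕜 ι : Type*} [RCLike 𝕜] [Fintype ι]
    (a b : EuclideanSpace 𝕜 ι) : ‖∑ j, a j * b j‖ ≤ ‖a‖ * ‖b‖ := by
  rw [EuclideanSpace.norm_eq, EuclideanSpace.norm_eq]
  calc ‖∑ j, a j * b j‖ ≤ ∑ j, ‖a j‖ * ‖b j‖ := by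
        simpa only [norm_mul] using norm_sum_le univ fun j => a j * b j
    _ ≤ _ := Real.sum_mul_le_sqrt_mul_sqrt _ _ _

theorem sum_mul_sub_three_point {ι R : Type*} [Fintype ι] [CommRing R] (p q w ζ z : ι → R) :
    ∑ j, p j * (w j - z j) =
      ∑ j, p j * (w j - ζ j) + ∑ j, q j * (ζ j - z j) + ∑ j, (p j - q j) * (ζ j - z j) := by
  rw [← sum_add_distrib, ← sum_add_distrib]
  exact sum_congr rfl fun j _ => by ring

section Gauge

variable {ι : Type*} [Fintype ι]

/-- The model `|Im ⟨∂ρ(w), w − z⟩| + |w − z|²` of `|g₀(w, z)|`. -/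
noncomputable def gaugeSq (dρ : EuclideanSpace ℂ ι → EuclideanSpace ℂ ι)
    (w z : EuclideanSpace ℂ ι) : ℝ :=
  |(∑ j, dρ w j * (w j - z j)).im| + ‖w - z‖ ^ 2

theorem abs_im_sum_mul_sub_le {dρ : EuclideanSpace ℂ ι → EuclideanSpace ℂ ι} {L : ℝ}
    {w ζ : EuclideanSpace ℂ ι} (hL : ‖dρ w - dρ ζ‖ ≤ L * ‖w - ζ‖) (z : EuclideanSpace ℂ ι) :
    |(∑ j, dρ w j * (w j - z j)).im| ≤
      |(∑ j, dρ w j * (w j - ζ j)).im| + |(∑ j, dρ ζ j * (ζ j - z j)).im| +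
        L * ‖w - ζ‖ * ‖ζ - z‖ := by
  have herr : ‖∑ j, (dρ w j - dρ ζ j) * (ζ j - z j)‖ ≤ L * ‖w - ζ‖ * ‖ζ - z‖ := by
    calc ‖∑ j, (dρ w j - dρ ζ j) * (ζ j - z j)‖ ≤ ‖dρ w - dρ ζ‖ * ‖ζ - z‖ := by
          simpa only [PiLp.sub_apply] using EuclideanSpace.norm_sum_mul_le (dρ w - dρ ζ) (ζ - z)
      _ ≤ L * ‖w - ζ‖ * ‖ζ - z‖ := by gcongr
  rw [sum_mul_sub_three_point (dρ w) (dρ ζ) w ζ z, Complex.add_im, Complex.add_im]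
  grw [abs_add_le, abs_add_le, (Complex.abs_im_le_norm _).trans herr]

theorem gaugeSq_le_of_lipschitz {dρ : EuclideanSpace ℂ ι → EuclideanSpace ℂ ι} {L : ℝ}
    {w ζ : EuclideanSpace ℂ ι} (hL : ‖dρ w - dρ ζ‖ ≤ L * ‖w - ζ‖) (z : EuclideanSpace ℂ ι) :
    gaugeSq dρ w z ≤ (|L| / 2 + 2) * (gaugeSq dρ w ζ + gaugeSq dρ ζ z) := by
  set x := ‖w - ζ‖
  set y := ‖ζ - z‖
  have him := abs_im_sum_mul_sub_le hL z
  have hdist : ‖w - z‖ ≤ x + y := norm_sub_le_norm_sub_add_norm_sub w ζ z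
  have hLxy : L * x * y ≤ |L| * x * y := by gcongr; exact le_abs_self L
  have hxy : 2 * x * y ≤ x ^ 2 + y ^ 2 := two_mul_le_add_sq x y
  have hx : 0 ≤ x := norm_nonneg _
  have hy : 0 ≤ y := norm_nonneg _
  unfold gaugeSq
  nlinarith [abs_nonneg L, abs_nonneg (∑ j, dρ w j * (w j - ζ j)).im,
    abs_nonneg (∑ j, dρ ζ j * (ζ j - z j)).im, norm_nonneg (w - z), mul_nonneg hx hy]

end Gauge

theorem quasi_triangle_of_sq_comparable {α : Type*} {s : Set α} {Q δ : α → α → ℝ}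
    {c₁ c₂ K : ℝ} (hc₁ : 0 < c₁) (hc₂ : 0 ≤ c₂) (hK : 0 ≤ K) (hδ0 : ∀ x y, 0 ≤ δ x y)
    (hQ : ∀ x ∈ s, ∀ y ∈ s, ∀ z ∈ s, Q x z ≤ K * (Q x y + Q y z))
    (hcomp : ∀ x ∈ s, ∀ y ∈ s, c₁ * Q x y ≤ δ x y ^ 2 ∧ δ x y ^ 2 ≤ c₂ * Q x y) :
    ∀ x ∈ s, ∀ y ∈ s, ∀ z ∈ s, δ x z ≤ √(c₂ * K / c₁) * (δ x y + δ y z) := by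
  intro x hx y hy z hz
  have hxy := (hcomp x hx y hy).1
  have hyz := (hcomp y hy z hz).1
  have hQsum : Q x y + Q y z ≤ (δ x y + δ y z) ^ 2 / c₁ := by
    rw [le_div_iff₀ hc₁]
    nlinarith [mul_nonneg (hδ0 x y) (hδ0 y z)]
  have hsq : δ x z ^ 2 ≤ (√(c₂ * K / c₁) * (δ x y + δ y z)) ^ 2 := by
    rw [mul_pow, Real.sq_sqrt (by positivity)]
    calc δ x z ^ 2 ≤ c₂ * Q x z := (hcomp x hx z hz).2
      _ ≤ c₂ * (K * ((δ x y + δ y z) ^ 2 / c₁)) := by grw [hQ x hx y hy z hz, hQsum]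
      _ = c₂ * K / c₁ * (δ x y + δ y z) ^ 2 := by ring
  exact le_of_sq_le_sq hsq (by have := hδ0 x y; have := hδ0 y z; positivity)

/-- Quasi-triangle inequality for `δ(w,z) = |g₀(w,z)|^{1/2}` where
`δ(w,z)² ≈ |Im⟨∂ρ(w), w−z⟩| + |w−z|²` on `bD`, with `∂ρ` Lipschitz on `bD`. -/
theorem stmt6 (n : ℕ) (bD : Set (EuclideanSpace ℂ (Fin n)))
    (dρ : EuclideanSpace ℂ (Fin n) → EuclideanSpace ℂ (Fin n))
    (L : ℝ) (hL : ∀ w ∈ bD, ∀ ζ ∈ bD, ‖dρ w - dρ ζ‖ ≤ L * ‖w - ζ‖)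
    (δ : EuclideanSpace ℂ (Fin n) → EuclideanSpace ℂ (Fin n) → ℝ)
    (hδ0 : ∀ w z, 0 ≤ δ w z)
    (c₁ c₂ : ℝ) (hc₁ : 0 < c₁) (hc₂ : 0 < c₂)
    (hcomp : ∀ w ∈ bD, ∀ z ∈ bD,
      c₁ * (|(∑ j, dρ w j * (w j - z j)).im| + ‖w - z‖ ^ 2) ≤ δ w z ^ 2 ∧
        δ w z ^ 2 ≤ c₂ * (|(∑ j, dρ w j * (w j - z j)).im| + ‖w - z‖ ^ 2)) :
    ∃ C : ℝ, 0 < C ∧ ∀ w ∈ bD, ∀ ζ ∈ bD, ∀ z ∈ bD,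
      δ w z ≤ C * (δ w ζ + δ ζ z) := by
  have hK : 0 < |L| / 2 + 2 := by positivity
  refine ⟨√(c₂ * (|L| / 2 + 2) / c₁), by positivity, ?_⟩
  exact quasi_triangle_of_sq_comparable (Q := gaugeSq dρ) hc₁ hc₂.le hK.le hδ0
    (fun w hw ζ hζ z _ => gaugeSq_le_of_lipschitz (hL w hw ζ hζ) z) hcomp
end

section
/- With δ as above (δ(w,z)² ≈ |Im⟨∂ρ(w), w−z⟩| + |w−z|² on bD × bD), the quasi-distance δ is quasi-symmetric: δ(w,z) ≈ δ(z,w) for w, z ∈ bD. -/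
/-
Write `Φ(w,z) = |Im⟨∂ρ(w), w−z⟩| + |w−z|²`. The hypothesis on the imaginary parts gives
`Φ(w,z) ≤ (|C₀| + 1) Φ(z,w)`, and squeezing between `c₁ Φ ≤ δ² ≤ c₂ Φ` turns this into
`δ(w,z)² ≤ (c₂ (|C₀| + 1) / c₁) δ(z,w)²`; the constant is the square root of that factor.
-/

lemma add_le_mul_add_of_abs_sub_le {A B C₀ t : ℝ} (hB : 0 ≤ B) (ht : 0 ≤ t)
    (h : |A - B| ≤ C₀ * t) : A + t ≤ (|C₀| + 1) * (B + t) := by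
  have hAB : A - B ≤ |C₀| * t :=
    (le_abs_self _).trans (h.trans (mul_le_mul_of_nonneg_right (le_abs_self _) ht))
  nlinarith [mul_nonneg (abs_nonneg C₀) hB]

lemma le_sqrt_mul_of_sq_le_mul_sq {a b K : ℝ} (hb : 0 ≤ b) (h : a ^ 2 ≤ K * b ^ 2) :
    a ≤ √K * b :=
  calc a ≤ √(K * b ^ 2) := Real.le_sqrt_of_sq_le h
    _ = √K * b := by rw [Real.sqrt_mul' _ (sq_nonneg b), Real.sqrt_sq hb]

lemma le_sqrt_mul_of_sq_comparable {d d' p p' c₁ c₂ M : ℝ} (hd' : 0 ≤ d') (hc₁ : 0 < c₁)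
    (hc₂ : 0 ≤ c₂) (hM : 0 ≤ M) (hlow : c₁ * p' ≤ d' ^ 2) (hup : d ^ 2 ≤ c₂ * p)
    (hp : p ≤ M * p') : d ≤ √(c₂ * M / c₁) * d' := by
  refine le_sqrt_mul_of_sq_le_mul_sq hd' ?_
  have hp' : p' ≤ d' ^ 2 / c₁ := by rwa [le_div_iff₀ hc₁, mul_comm]
  calc d ^ 2 ≤ c₂ * p := hup
    _ ≤ c₂ * (M * p') := mul_le_mul_of_nonneg_left hp hc₂
    _ = c₂ * M * p' := by ring
    _ ≤ c₂ * M * (d' ^ 2 / c₁) := mul_le_mul_of_nonneg_left hp' (mul_nonneg hc₂ hM)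
    _ = c₂ * M / c₁ * d' ^ 2 := by ring

/-- Quasi-symmetry of the quasi-distance: with
`δ(w,z)² ≈ |Im⟨∂ρ(w), w−z⟩| + |w−z|²` on `bD × bD` and
`|Im⟨∂ρ(w), w−z⟩| = |Im⟨∂ρ(z), z−w⟩| + O(|w−z|²)`, one has `δ(w,z) ≈ δ(z,w)`. -/
theorem stmt7 (n : ℕ) (bD : Set (EuclideanSpace ℂ (Fin n)))
    (dρ : EuclideanSpace ℂ (Fin n) → EuclideanSpace ℂ (Fin n))
    (C₀ : ℝ) (him : ∀ w ∈ bD, ∀ z ∈ bD,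
      abs (|(∑ j, dρ w j * (w j - z j)).im| - |(∑ j, dρ z j * (z j - w j)).im|) ≤
        C₀ * ‖w - z‖ ^ 2)
    (δ : EuclideanSpace ℂ (Fin n) → EuclideanSpace ℂ (Fin n) → ℝ)
    (hδ0 : ∀ w z, 0 ≤ δ w z)
    (c₁ c₂ : ℝ) (hc₁ : 0 < c₁) (hc₂ : 0 < c₂)
    (hcomp : ∀ w ∈ bD, ∀ z ∈ bD,
      c₁ * (|(∑ j, dρ w j * (w j - z j)).im| + ‖w - z‖ ^ 2) ≤ δ w z ^ 2 ∧
        δ w z ^ 2 ≤ c₂ * (|(∑ j, dρ w j * (w j - z j)).im| + ‖w - z‖ ^ 2)) :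
    ∃ C : ℝ, 0 < C ∧ ∀ w ∈ bD, ∀ z ∈ bD,
      δ w z ≤ C * δ z w ∧ δ z w ≤ C * δ w z := by
  have hle : ∀ w ∈ bD, ∀ z ∈ bD, δ w z ≤ √(c₂ * (|C₀| + 1) / c₁) * δ z w := by
    intro w hw z hz
    have hΦ : |(∑ j, dρ w j * (w j - z j)).im| + ‖w - z‖ ^ 2 ≤
        (|C₀| + 1) * (|(∑ j, dρ z j * (z j - w j)).im| + ‖z - w‖ ^ 2) := by
      rw [norm_sub_rev z w]
      exact add_le_mul_add_of_abs_sub_le (abs_nonneg _) (sq_nonneg _) (him w hw z hz)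
    exact le_sqrt_mul_of_sq_comparable (hδ0 z w) hc₁ hc₂.le (by positivity)
      (hcomp z hz w hw).1 (hcomp w hw z hz).2 hΦ
  exact ⟨_, Real.sqrt_pos.2 (by positivity), fun w hw z hz => ⟨hle w hw z hz, hle z hz w hw⟩⟩
end

section
/- Let gε(w,z) = −i c_w z_n + Q(z) in coordinates centered at w with c_w = |∇ρ(w)|/2 > 0 and |Q(z)| ≤ c|z|², and suppose Re gε(w,z) ≥ c'(−ρ(z) + |w−z|²) for z ∈ D̄. Then for z ∈ D̄: |gε(w,z)| ≈ |x_n| + |w−z|² + |ρ(z)|, where x_n = Re z_n, with constants independent of ε, w, z. -/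
/-!
Write `ζ = z_n`, `q = Q(z)` and `s = ‖z‖²`, so that `g = -i c_w ζ + q` with `‖q‖ ≤ c s`; hence
`‖g‖` and `c_w ‖ζ‖` differ by at most `c s`. For the lower bound, `Re g ≥ c' (|ρ| + s)` controls
`|ρ| + s`, and then `c_w |Re ζ| ≤ c_w ‖ζ‖ ≤ ‖g‖ + c s` controls `|Re ζ|`. For the upper bound,
`‖ζ‖ ≤ |Re ζ| + |Im ζ|`, and the Taylor expansion `ρ = -2 c_w Im ζ + O(s)` bounds
`c_w |Im ζ|` by `|ρ| + s`.
-/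

open Complex

section LeviPolynomial

variable {cw c c' Cρ ρ s : ℝ} {ζ q : ℂ}

lemma norm_neg_I_mul_ofReal_mul (hcw : 0 ≤ cw) (ζ : ℂ) : ‖-I * (cw : ℂ) * ζ‖ = cw * ‖ζ‖ := by
  simp [abs_of_nonneg hcw]

lemma abs_re_add_add_abs_le_mul_norm (hcw : 0 < cw) (hc : 0 ≤ c) (hc' : 0 < c')
    (hρ : ρ ≤ 0) (hq : ‖q‖ ≤ c * s) (hre : c' * (-ρ + s) ≤ (-I * (cw : ℂ) * ζ + q).re) :
    |ζ.re| + s + |ρ| ≤ ((1 + c / c') / cw + 1 / c') * ‖-I * (cw : ℂ) * ζ + q‖ := by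
  set g := -I * (cw : ℂ) * ζ + q
  have hsρ : s + |ρ| ≤ ‖g‖ / c' := by
    rw [le_div_iff₀ hc', abs_of_nonpos hρ]
    linarith [hre.trans (re_le_norm g)]
  have hre_ζ : cw * |ζ.re| ≤ (1 + c / c') * ‖g‖ :=
    calc cw * |ζ.re| ≤ cw * ‖ζ‖ := by gcongr; exact abs_re_le_norm ζ
      _ = ‖g - q‖ := by rw [← norm_neg_I_mul_ofReal_mul hcw.le, add_sub_cancel_right]
      _ ≤ ‖g‖ + c * s := (norm_sub_le g q).trans (by gcongr)
      _ ≤ ‖g‖ + c * (‖g‖ / c') := by gcongr; linarith [abs_nonneg ρ]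
      _ = (1 + c / c') * ‖g‖ := by ring
  have hre_ζ' : |ζ.re| ≤ (1 + c / c') / cw * ‖g‖ := by
    rw [div_mul_eq_mul_div, le_div_iff₀ hcw]
    linarith
  calc |ζ.re| + s + |ρ| ≤ (1 + c / c') / cw * ‖g‖ + ‖g‖ / c' := by linarith
    _ = ((1 + c / c') / cw + 1 / c') * ‖g‖ := by ring

lemma norm_le_mul_abs_re_add_add_abs (hcw : 0 < cw) (hc : 0 ≤ c) (hCρ : 0 ≤ Cρ) (hs : 0 ≤ s)
    (hq : ‖q‖ ≤ c * s) (hρ : |ρ + 2 * cw * ζ.im| ≤ Cρ * s) :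
    ‖-I * (cw : ℂ) * ζ + q‖ ≤ (cw + Cρ + c + 1) * (|ζ.re| + s + |ρ|) := by
  have hg : ‖-I * (cw : ℂ) * ζ + q‖ ≤ cw * ‖ζ‖ + c * s :=
    (norm_add_le _ _).trans (by rw [norm_neg_I_mul_ofReal_mul hcw.le]; gcongr)
  have hζ : ‖ζ‖ ≤ |ζ.re| + |ζ.im| := norm_le_abs_re_add_abs_im ζ
  have him : 2 * (cw * |ζ.im|) ≤ |ρ| + Cρ * s :=
    calc 2 * (cw * |ζ.im|) = |(ρ + 2 * cw * ζ.im) - ρ| := by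
          rw [add_sub_cancel_left, abs_mul, abs_mul, abs_two, abs_of_pos hcw]; ring
      _ ≤ |ρ| + Cρ * s := by linarith [abs_sub (ρ + 2 * cw * ζ.im) ρ]
  nlinarith [abs_nonneg ζ.re, abs_nonneg ρ, mul_le_mul_of_nonneg_left hζ hcw.le]

end LeviPolynomial

/-- Size of the modified Levi polynomial: in special coordinates centered at
`w ∈ bD` (so `z` is the coordinate of the point, `z_n` the normal complex
coordinate), if `gε(z) = −i c_w z_n + Q(z)` with `|Q(z)| ≤ c|z|²`,
`Re gε(z) ≥ c′(−ρ(z)+|z|²)` on `D̄`, and `ρ(z) = −2c_w·Im z_n + O(|z|²)`,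
then `|gε(z)| ≈ |Re z_n| + |z|² + |ρ(z)|` for `z ∈ D̄`,
with constants independent of `ε`, `w`, `z`. -/
theorem stmt9 (n : ℕ) (c c' Cρ cw : ℝ)
    (hc : 0 < c) (hc' : 0 < c') (hCρ : 0 < Cρ) (hcw : 0 < cw) :
    ∃ m M : ℝ, 0 < m ∧ 0 < M ∧
      ∀ (g Q : EuclideanSpace ℂ (Fin (n + 1)) → ℂ)
        (ρ : EuclideanSpace ℂ (Fin (n + 1)) → ℝ),
        (∀ z, g z = -Complex.I * (cw : ℂ) * z (Fin.last n) + Q z) →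
        (∀ z, ‖Q z‖ ≤ c * ‖z‖ ^ 2) →
        (∀ z, |ρ z + 2 * cw * (z (Fin.last n)).im| ≤ Cρ * ‖z‖ ^ 2) →
        (∀ z, ρ z ≤ 0 → c' * (-ρ z + ‖z‖ ^ 2) ≤ (g z).re) →
        ∀ z, ρ z ≤ 0 → ‖z‖ ≤ 1 →
          m * (|(z (Fin.last n)).re| + ‖z‖ ^ 2 + |ρ z|) ≤ ‖g z‖ ∧
            ‖g z‖ ≤ M * (|(z (Fin.last n)).re| + ‖z‖ ^ 2 + |ρ z|) := by
  have hK : 0 < (1 + c / c') / cw + 1 / c' := by positivity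
  refine ⟨((1 + c / c') / cw + 1 / c')⁻¹, cw + Cρ + c + 1, by positivity, by positivity, ?_⟩
  intro g Q ρ hg hQ hρ hre z hz _
  have hrez := hre z hz
  rw [hg z] at hrez ⊢
  constructor
  · rw [inv_mul_le_iff₀ hK]
    exact abs_re_add_add_abs_le_mul_norm hcw hc.le hc' hz (hQ z) hrez
  · exact norm_le_mul_abs_re_add_add_abs hcw hc.le hCρ.le (by positivity) (hQ z) (hρ z)
end
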